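/- Let C ∈ ℝ^{n×m}, a ∈ ℝ^n, b ∈ ℝ^m, λ > 0, and let T̃ ∈ ℝ^{n×m} have strictly positive entries. Define T* entrywise by T*_{i,j} = T̃_{i,j} · max(0, a_i + b_j − C_{i,j}/λ) / (ã_i + b̃_j), where ã_i = ∑_j T̃_{i,j} and b̃_j = ∑_i T̃_{i,j}. Then F_λ(T*) ≤ F_λ(T̃); that is, the ℓ2 multiplicative update does not increase the ℓ2-penalized unbalanced optimal transport objective. -/
import Mathlib


open Finset


lemma jensen_aux {ι : Type*} [Fintype ι] [Nonempty ι] (w x : ι → ℝ) (hw : ∀ i, 0 < w i) :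
    (∑ i, x i) ^ 2 ≤ (∑ i, w i) * ∑ i, x i ^ 2 / w i := by
  have hW : 0 < ∑ i, w i := Finset.sum_pos (fun i _ => hw i) Finset.univ_nonempty
  have h := Finset.sq_sum_div_le_sum_sq_div Finset.univ x (fun i _ => hw i)
  calc (∑ i, x i) ^ 2 = (∑ i, w i) * ((∑ i, x i) ^ 2 / ∑ i, w i) := by
        field_simp
    _ ≤ (∑ i, w i) * ∑ i, x i ^ 2 / w i := mul_le_mul_of_nonneg_left h hW.le

lemma scalar_key (c e s d lam t : ℝ) (hs : 0 < s) (hd : 0 < d) (hlam : 0 < lam) (ht : 0 ≤ t) :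
    c * (s * max 0 (e - c / lam) / d) + lam / 2 * ((d * (s * max 0 (e - c / lam) / d) ^ 2) / s)
      - lam * e * (s * max 0 (e - c / lam) / d)
    ≤ c * t + lam / 2 * ((d * t ^ 2) / s) - lam * e * t := by
  rcases le_or_gt (e - c / lam) 0 with h | h
  · rw [max_eq_left h]
    have h1 : lam * e ≤ c := by
      have h' : e ≤ c / lam := by linarith
      calc lam * e ≤ lam * (c / lam) := mul_le_mul_of_nonneg_left h' hlam.le
        _ = c := by field_simp
    have h2 : 0 ≤ d * t ^ 2 / s := by positivity
    have h3 : 0 ≤ t * (c - lam * e) := mul_nonneg ht (by linarith)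
    norm_num
    nlinarith
  · rw [max_eq_right h.le]
    set t0 : ℝ := s * (e - c / lam) / d with ht0
    have key : (c * t + lam / 2 * ((d * t ^ 2) / s) - lam * e * t)
        - (c * t0 + lam / 2 * ((d * t0 ^ 2) / s) - lam * e * t0)
        = lam * d / (2 * s) * (t - t0) ^ 2 := by
      rw [ht0]; field_simp; ring
    nlinarith [mul_nonneg (by positivity : (0:ℝ) ≤ lam * d / (2 * s)) (sq_nonneg (t - t0))]

/-- The ℓ2-penalized unbalanced optimal transport objective
`F_λ(T) = ∑_{i,j} C_{i,j} T_{i,j} + (λ/2)‖T𝟙_m − a‖² + (λ/2)‖Tᵀ𝟙_n − b‖²`. -/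
noncomputable def FobjL2 {n m : ℕ} (C : Matrix (Fin n) (Fin m) ℝ)
    (a : Fin n → ℝ) (b : Fin m → ℝ) (lam : ℝ)
    (T : Matrix (Fin n) (Fin m) ℝ) : ℝ :=
  (∑ i, ∑ j, C i j * T i j)
    + lam / 2 * ∑ i, ((∑ j, T i j) - a i) ^ 2
    + lam / 2 * ∑ j, ((∑ i, T i j) - b j) ^ 2

/-- The ℓ2 multiplicative update does not increase the ℓ2-penalized UOT objective. -/
theorem l2_update_decreases_objective {n m : ℕ} (C : Matrix (Fin n) (Fin m) ℝ)
    (a : Fin n → ℝ) (b : Fin m → ℝ) (lam : ℝ) (hlam : 0 < lam)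
    (Ttil : Matrix (Fin n) (Fin m) ℝ) (hTtil : ∀ i j, 0 < Ttil i j)
    (Tstar : Matrix (Fin n) (Fin m) ℝ)
    (hTstarDef : ∀ i j, Tstar i j =
      Ttil i j * max 0 (a i + b j - C i j / lam)
        / ((∑ l, Ttil i l) + (∑ k, Ttil k j))) :
    FobjL2 C a b lam Tstar ≤ FobjL2 C a b lam Ttil := by
  rcases Nat.eq_zero_or_pos m with hm | hm
  · subst hm; simp [FobjL2]
  rcases Nat.eq_zero_or_pos n with hn | hn
  · subst hn; simp [FobjL2]
  haveI : Nonempty (Fin m) := Fin.pos_iff_nonempty.mp hm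
  haveI : Nonempty (Fin n) := Fin.pos_iff_nonempty.mp hn
  set at_ : Fin n → ℝ := fun i => ∑ l, Ttil i l with hat_def
  set bt_ : Fin m → ℝ := fun j => ∑ k, Ttil k j with hbt_def
  have hat_pos : ∀ i, 0 < at_ i :=
    fun i => Finset.sum_pos (fun l _ => hTtil i l) Finset.univ_nonempty
  have hbt_pos : ∀ j, 0 < bt_ j :=
    fun j => Finset.sum_pos (fun k _ => hTtil k j) Finset.univ_nonempty
  set g : Matrix (Fin n) (Fin m) ℝ → ℝ := fun T =>
    ∑ i, ∑ j, (C i j * T i j + lam / 2 * (((at_ i + bt_ j) * T i j ^ 2) / Ttil i j)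
      - lam * (a i + b j) * T i j) with hg_def
  -- Step 1 : g Tstar ≤ g Ttil
  have step1 : g Tstar ≤ g Ttil := by
    apply Finset.sum_le_sum; intro i _
    apply Finset.sum_le_sum; intro j _
    have h := scalar_key (C i j) (a i + b j) (Ttil i j) (at_ i + bt_ j) lam (Ttil i j)
      (hTtil i j) (add_pos (hat_pos i) (hbt_pos j)) hlam (hTtil i j).le
    rw [hTstarDef i j]
    exact h
  -- splitting identity for g
  have hg_eq : ∀ T : Matrix (Fin n) (Fin m) ℝ, g T =
      (∑ i, ∑ j, C i j * T i j)
      + lam / 2 * (∑ i, at_ i * ∑ j, T i j ^ 2 / Ttil i j)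
      + lam / 2 * (∑ j, bt_ j * ∑ i, T i j ^ 2 / Ttil i j)
      - lam * (∑ i, a i * ∑ j, T i j)
      - lam * (∑ j, b j * ∑ i, T i j) := by
    intro T
    have e1 : g T = ∑ i, ∑ j, (C i j * T i j
        + lam / 2 * (at_ i * (T i j ^ 2 / Ttil i j))
        + lam / 2 * (bt_ j * (T i j ^ 2 / Ttil i j))
        - lam * (a i * T i j) - lam * (b j * T i j)) := by
      rw [hg_def]
      exact Finset.sum_congr rfl fun i _ => Finset.sum_congr rfl fun j _ => by ring
    rw [e1]
    simp only [Finset.sum_add_distrib, Finset.sum_sub_distrib]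
    congr 1
    · congr 1
      · congr 1
        · congr 1
          · -- ∑ i ∑ j lam/2 * (at_ i * q) = lam/2 * ∑ i at_ i * ∑ j q
            rw [Finset.mul_sum]
            exact Finset.sum_congr rfl fun i _ => by
              rw [Finset.mul_sum, Finset.mul_sum]
        · -- bt_ term : swap sums
          rw [Finset.sum_comm, Finset.mul_sum]
          exact Finset.sum_congr rfl fun j _ => by
            rw [Finset.mul_sum, Finset.mul_sum]
      · -- a term
        rw [Finset.mul_sum]
        exact Finset.sum_congr rfl fun i _ => by rw [Finset.mul_sum, Finset.mul_sum]
    · -- b term : swap sums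
      rw [Finset.sum_comm, Finset.mul_sum]
      exact Finset.sum_congr rfl fun j _ => by rw [Finset.mul_sum, Finset.mul_sum]
  -- splitting identity for F
  have hF_eq : ∀ T : Matrix (Fin n) (Fin m) ℝ, FobjL2 C a b lam T =
      (∑ i, ∑ j, C i j * T i j)
      + lam / 2 * (∑ i, (∑ j, T i j) ^ 2)
      + lam / 2 * (∑ j, (∑ i, T i j) ^ 2)
      - lam * (∑ i, a i * ∑ j, T i j)
      - lam * (∑ j, b j * ∑ i, T i j)
      + lam / 2 * (∑ i, a i ^ 2) + lam / 2 * (∑ j, b j ^ 2) := by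
    intro T
    unfold FobjL2
    have e1 : ∑ i, ((∑ j, T i j) - a i) ^ 2
        = (∑ i, (∑ j, T i j) ^ 2) - 2 * (∑ i, a i * ∑ j, T i j) + ∑ i, a i ^ 2 := by
      rw [Finset.mul_sum, ← Finset.sum_sub_distrib, ← Finset.sum_add_distrib]
      exact Finset.sum_congr rfl fun i _ => by ring
    have e2 : ∑ j, ((∑ i, T i j) - b j) ^ 2
        = (∑ j, (∑ i, T i j) ^ 2) - 2 * (∑ j, b j * ∑ i, T i j) + ∑ j, b j ^ 2 := by
      rw [Finset.mul_sum, ← Finset.sum_sub_distrib, ← Finset.sum_add_distrib]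
      exact Finset.sum_congr rfl fun j _ => by ring
    rw [e1, e2]; ring
  -- Jensen rowwise / columnwise for Tstar
  have rows : (∑ i, (∑ j, Tstar i j) ^ 2) ≤ ∑ i, at_ i * ∑ j, Tstar i j ^ 2 / Ttil i j :=
    Finset.sum_le_sum fun i _ => jensen_aux (fun j => Ttil i j) (fun j => Tstar i j) (hTtil i)
  have cols : (∑ j, (∑ i, Tstar i j) ^ 2) ≤ ∑ j, bt_ j * ∑ i, Tstar i j ^ 2 / Ttil i j :=
    Finset.sum_le_sum fun j _ => jensen_aux (fun k => Ttil k j) (fun k => Tstar k j)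
      (fun k => hTtil k j)
  -- equalities at Ttil
  have hq : ∀ i j, Ttil i j ^ 2 / Ttil i j = Ttil i j := fun i j => by
    rw [pow_two, mul_div_assoc, div_self (hTtil i j).ne', mul_one]
  have rows_eq : (∑ i, (∑ j, Ttil i j) ^ 2) = ∑ i, at_ i * ∑ j, Ttil i j ^ 2 / Ttil i j := by
    refine Finset.sum_congr rfl fun i _ => ?_
    simp only [hq]
    rw [pow_two]
  have cols_eq : (∑ j, (∑ i, Ttil i j) ^ 2) = ∑ j, bt_ j * ∑ i, Ttil i j ^ 2 / Ttil i j := by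
    refine Finset.sum_congr rfl fun j _ => ?_
    simp only [hq]
    rw [pow_two]
  -- assemble
  have h1 := hF_eq Tstar
  have h2 := hF_eq Ttil
  have h3 := hg_eq Tstar
  have h4 := hg_eq Ttil
  have hrows' : lam / 2 * (∑ i, (∑ j, Tstar i j) ^ 2)
      ≤ lam / 2 * (∑ i, at_ i * ∑ j, Tstar i j ^ 2 / Ttil i j) :=
    mul_le_mul_of_nonneg_left rows (by linarith)
  have hcols' : lam / 2 * (∑ j, (∑ i, Tstar i j) ^ 2)
      ≤ lam / 2 * (∑ j, bt_ j * ∑ i, Tstar i j ^ 2 / Ttil i j) :=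
    mul_le_mul_of_nonneg_left cols (by linarith)
  have rows_eq' : lam / 2 * (∑ i, (∑ j, Ttil i j) ^ 2)
      = lam / 2 * (∑ i, at_ i * ∑ j, Ttil i j ^ 2 / Ttil i j) := by rw [rows_eq]
  have cols_eq' : lam / 2 * (∑ j, (∑ i, Ttil i j) ^ 2)
      = lam / 2 * (∑ j, bt_ j * ∑ i, Ttil i j ^ 2 / Ttil i j) := by rw [cols_eq]
  linarith
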